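/- arXiv:1502.05433 — 6 statements merged into one kernel-verified Lean document; each statement's English description precedes it below -/
import Mathlib

section
/- Let S be a finite index set, let {R_ℓ}_{ℓ∈S} be M×M complex Hermitian positive semidefinite matrices, let c > 0, and let k ∈ S. Suppose R_k·R_ℓ = 0 for every ℓ ∈ S with ℓ ≠ k. Then (Σ_{ℓ∈S} R_ℓ + c·I)⁻¹·R_k = (R_k + c·I)⁻¹·R_k = R_k·(R_k + c·I)⁻¹. -/
/-!
Writing `A = ∑ ℓ, R ℓ + c • 1` and `B = R k + c • 1`, orthogonality (together with its Hermitian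
conjugate `R ℓ * R k = 0`) gives the intertwining relation `R k * B = A * R k`. Since both `A` and
`B` are positive definite, hence invertible, it inverts to `R k * B⁻¹ = A⁻¹ * R k`; the case
`A = B` of the same argument says that `R k` commutes with `B⁻¹`.
-/

open scoped ComplexOrder

namespace Matrix

variable {n : Type*} [Fintype n]

theorem IsHermitian.mul_eq_zero_symm {α : Type*} [Semiring α] [StarRing α]
    {A B : Matrix n n α} (hA : A.IsHermitian) (hB : B.IsHermitian) (h : A * B = 0) :
    B * A = 0 := by
  simpa [hA.eq, hB.eq] using congrArg Matrix.conjTranspose h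

variable [DecidableEq n]

theorem SemiconjBy.nonsing_inv_right {α : Type*} [CommRing α] {A X Y : Matrix n n α}
    (hX : IsUnit X.det) (hY : IsUnit Y.det) (h : SemiconjBy A X Y) : SemiconjBy A X⁻¹ Y⁻¹ := by
  simpa using SemiconjBy.zpow_right hX hY h (-1)

theorem PosSemidef.isUnit_det_add_smul_one {A : Matrix n n ℂ} (hA : A.PosSemidef) {c : ℝ}
    (hc : 0 < c) : IsUnit (A + (c : ℂ) • 1).det :=
  (isUnit_iff_isUnit_det _).mp
    (PosDef.posSemidef_add hA (PosDef.one.smul (by exact_mod_cast hc))).isUnit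

end Matrix

theorem Finset.sum_mul_eq_of_mul_eq_zero {ι α : Type*} [NonUnitalNonAssocSemiring α]
    {S : Finset ι} {f : ι → α} {k : ι} (hk : k ∈ S) (h : ∀ ℓ ∈ S, ℓ ≠ k → f ℓ * f k = 0) :
    (∑ ℓ ∈ S, f ℓ) * f k = f k * f k := by
  rw [Finset.sum_mul, Finset.sum_eq_single_of_mem k hk h]

theorem inv_sum_mul_eq_of_orthogonal_general
    {M : ℕ} {ι : Type*} (S : Finset ι)
    (R : ι → Matrix (Fin M) (Fin M) ℂ)
    (hR : ∀ ℓ ∈ S, (R ℓ).PosSemidef)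
    (c : ℝ) (hc : 0 < c) (k : ι) (hk : k ∈ S)
    (horth : ∀ ℓ ∈ S, ℓ ≠ k → R k * R ℓ = 0) :
    (∑ ℓ ∈ S, R ℓ + (c : ℂ) • (1 : Matrix (Fin M) (Fin M) ℂ))⁻¹ * R k =
      (R k + (c : ℂ) • (1 : Matrix (Fin M) (Fin M) ℂ))⁻¹ * R k ∧
    (R k + (c : ℂ) • (1 : Matrix (Fin M) (Fin M) ℂ))⁻¹ * R k =
      R k * (R k + (c : ℂ) • (1 : Matrix (Fin M) (Fin M) ℂ))⁻¹ := by
  set A := ∑ ℓ ∈ S, R ℓ + (c : ℂ) • (1 : Matrix (Fin M) (Fin M) ℂ)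
  set B := R k + (c : ℂ) • (1 : Matrix (Fin M) (Fin M) ℂ)
  have hA : IsUnit A.det := (Matrix.posSemidef_sum S hR).isUnit_det_add_smul_one hc
  have hB : IsUnit B.det := (hR k hk).isUnit_det_add_smul_one hc
  have hsum : (∑ ℓ ∈ S, R ℓ) * R k = R k * R k :=
    Finset.sum_mul_eq_of_mul_eq_zero hk fun ℓ hℓ hne ↦
      (hR k hk).isHermitian.mul_eq_zero_symm (hR ℓ hℓ).isHermitian (horth ℓ hℓ hne)
  have hsemi : SemiconjBy (R k) B A := by
    simp only [SemiconjBy, A, B, mul_add, add_mul, hsum, Matrix.mul_smul, Matrix.smul_mul,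
      mul_one, one_mul]
  have hcomm : Commute (R k) B := (Commute.refl _).add_right ((Commute.one_right _).smul_right _)
  have hA_inv : R k * B⁻¹ = A⁻¹ * R k := Matrix.SemiconjBy.nonsing_inv_right hB hA hsemi
  have hB_inv : R k * B⁻¹ = B⁻¹ * R k := Matrix.SemiconjBy.nonsing_inv_right hB hB hcomm
  exact ⟨hA_inv.symm.trans hB_inv, hB_inv.symm⟩

/-- If `R k * R ℓ = 0` for every `ℓ ∈ S` with `ℓ ≠ k`, then
`(∑_{ℓ ∈ S} R ℓ + c • I)⁻¹ * R k = (R k + c • I)⁻¹ * R k = R k * (R k + c • I)⁻¹`. -/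
theorem inv_sum_mul_eq_of_orthogonal
    {M : ℕ} {ι : Type*} [DecidableEq ι] (S : Finset ι)
    (R : ι → Matrix (Fin M) (Fin M) ℂ)
    (hR : ∀ ℓ ∈ S, (R ℓ).PosSemidef)
    (c : ℝ) (hc : 0 < c) (k : ι) (hk : k ∈ S)
    (horth : ∀ ℓ ∈ S, ℓ ≠ k → R k * R ℓ = 0) :
    (∑ ℓ ∈ S, R ℓ + (c : ℂ) • (1 : Matrix (Fin M) (Fin M) ℂ))⁻¹ * R k =
      (R k + (c : ℂ) • (1 : Matrix (Fin M) (Fin M) ℂ))⁻¹ * R k ∧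
    (R k + (c : ℂ) • (1 : Matrix (Fin M) (Fin M) ℂ))⁻¹ * R k =
      R k * (R k + (c : ℂ) • (1 : Matrix (Fin M) (Fin M) ℂ))⁻¹ :=
  inv_sum_mul_eq_of_orthogonal_general S R hR c hc k hk horth
end

section
/- (Theorem 1) Let R_1, …, R_K be M×M complex Hermitian positive semidefinite matrices (channel covariance matrices), let ρ > 0 and τ > 0, and set c = 1/(ρτ). For a pilot assignment π : {1,…,K} → {1,…,τ′} (any finite pilot set), define for each k the matrix C_{π_k} = Σ_{ℓ : π_ℓ = π_k} R_ℓ + c·I, and define the sum channel-estimation MSE ε(π) = Σ_{k=1}^{K} trace(R_k − R_k·C_{π_k}⁻¹·R_k). Then for every pilot assignment π it holds that ε(π) ≥ Σ_{k=1}^{K} trace(R_k − R_k·(R_k + c·I)⁻¹·R_k); moreover, if trace(R_i·R_j) = 0 for all i ≠ j with π_i = π_j, then equality holds, i.e., ε(π) = Σ_{k=1}^{K} trace(R_k − R_k·(R_k + c·I)⁻¹·R_k). -/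
/-!
Write `C_k = D_k + S_k` with `D_k = R_k + c I` positive definite and `S_k` the positive
semidefinite sum of the other covariances on pilot `π_k`. Matrix inversion is operator antitone,
so `R_k (D_k⁻¹ - C_k⁻¹) R_k ⪰ 0`, which is the termwise inequality. For positive semidefinite
`A, B`, `trace (A B) = 0` forces `A B = 0`; under orthogonality this gives `S_k R_k = 0`, and as
`D_k` commutes with `R_k`, `C_k (D_k⁻¹ R_k) = R_k`, i.e. `C_k⁻¹ R_k = D_k⁻¹ R_k`.
-/

open scoped ComplexOrder

namespace Matrix

variable {n : Type*} [Fintype n] [DecidableEq n]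

open scoped MatrixOrder in
theorem PosSemidef.mul_eq_zero_of_trace_mul_eq_zero {𝕜 : Type*} [RCLike 𝕜]
    {A B : Matrix n n 𝕜} (hA : A.PosSemidef) (hB : B.PosSemidef)
    (h : (A * B).trace = 0) : A * B = 0 := by
  obtain ⟨a, rfl⟩ := CStarAlgebra.nonneg_iff_eq_star_mul_self.mp hA.nonneg
  obtain ⟨b, rfl⟩ := CStarAlgebra.nonneg_iff_eq_star_mul_self.mp hB.nonneg
  simp only [star_eq_conjTranspose] at h ⊢
  have hab : a * bᴴ = 0 := by
    rw [← trace_mul_conjTranspose_self_eq_zero_iff, ← h, conjTranspose_mul,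
      conjTranspose_conjTranspose, mul_assoc aᴴ, trace_mul_comm aᴴ]
    simp only [mul_assoc]
  calc aᴴ * a * (bᴴ * b) = aᴴ * (a * bᴴ) * b := by simp only [mul_assoc]
    _ = 0 := by rw [hab, mul_zero, zero_mul]

open scoped MatrixOrder Matrix.Norms.L2Operator in
theorem PosDef.posSemidef_inv_sub_inv_add {A S : Matrix n n ℂ} (hA : A.PosDef)
    (hS : S.PosSemidef) : (A⁻¹ - (A + S)⁻¹).PosSemidef := by
  rw [nonsing_inv_eq_ringInverse, nonsing_inv_eq_ringInverse]
  exact CStarAlgebra.ringInverse_le_ringInverse (le_add_of_nonneg_right hS.nonneg)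
    (isStrictlyPositive_iff_posDef.mpr hA)

theorem trace_sub_mul_inv_mul_le_add {R D S : Matrix n n ℂ} (hR : R.IsHermitian) (hD : D.PosDef)
    (hS : S.PosSemidef) : (R - R * D⁻¹ * R).trace ≤ (R - R * (D + S)⁻¹ * R).trace := by
  have h := ((hD.posSemidef_inv_sub_inv_add hS).conjTranspose_mul_mul_same R).trace_nonneg
  rw [hR.eq, mul_sub, sub_mul, trace_sub] at h
  rw [← sub_nonneg, trace_sub, trace_sub]
  convert h using 1
  ring

theorem inv_add_mul_eq_inv_mul_of_mul_eq_zero {α : Type*} [CommRing α] {R D S : Matrix n n α}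
    (hD : IsUnit D) (hDS : IsUnit (D + S)) (hRD : Commute R D) (hSR : S * R = 0) :
    (D + S)⁻¹ * R = D⁻¹ * R := by
  have hRD' : Commute R D⁻¹ := by
    obtain ⟨u, rfl⟩ := hD
    rw [← coe_units_inv]
    exact hRD.units_inv_right
  have h : (D + S) * (D⁻¹ * R) = R := by
    rw [add_mul, ← mul_assoc, mul_nonsing_inv _ ((isUnit_iff_isUnit_det D).mp hD), one_mul,
      ← hRD'.eq, ← mul_assoc, hSR, zero_mul, add_zero]
  rw [← nonsing_inv_mul_cancel_left (D + S) (D⁻¹ * R) ((isUnit_iff_isUnit_det _).mp hDS), h]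

end Matrix

/-- **Theorem 1.** For channel covariance matrices `R 1, …, R K` (Hermitian PSD), training SNR
`ρ > 0`, pilot length `τ > 0`, `c = 1/(ρτ)`, and any pilot assignment `π`, the sum
channel-estimation MSE `ε(π) = ∑ k, trace (R k - R k * (C (π k))⁻¹ * R k)` with
`C (π k) = ∑_{ℓ : π ℓ = π k} R ℓ + c • I` satisfies
`ε(π) ≥ ∑ k, trace (R k - R k * (R k + c • I)⁻¹ * R k)`, with equality whenever
`trace (R i * R j) = 0` for all `i ≠ j` reusing the same pilot. -/
theorem sum_mse_ce_ge_and_eq_of_orthogonal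
    {M K τ' : ℕ} (R : Fin K → Matrix (Fin M) (Fin M) ℂ)
    (hR : ∀ k, (R k).PosSemidef)
    (ρ τ : ℝ) (hρ : 0 < ρ) (hτ : 0 < τ)
    (π : Fin K → Fin τ')
    (c : ℝ) (hc : c = 1 / (ρ * τ))
    (C : Fin K → Matrix (Fin M) (Fin M) ℂ)
    (hC : ∀ k, C k = ∑ ℓ ∈ Finset.univ.filter (fun ℓ => π ℓ = π k), R ℓ +
      (c : ℂ) • (1 : Matrix (Fin M) (Fin M) ℂ)) :
    (∑ k, (R k - R k * (C k)⁻¹ * R k).trace ≥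
      ∑ k, (R k - R k * (R k + (c : ℂ) • (1 : Matrix (Fin M) (Fin M) ℂ))⁻¹ * R k).trace) ∧
    ((∀ i j : Fin K, i ≠ j → π i = π j → (R i * R j).trace = 0) →
      ∑ k, (R k - R k * (C k)⁻¹ * R k).trace =
        ∑ k, (R k - R k * (R k + (c : ℂ) • (1 : Matrix (Fin M) (Fin M) ℂ))⁻¹ * R k).trace) := by
  set D : Fin K → Matrix (Fin M) (Fin M) ℂ := fun k => R k + (c : ℂ) • 1
  set S : Fin K → Matrix (Fin M) (Fin M) ℂ := fun k =>
    ∑ ℓ ∈ (Finset.univ.filter (fun ℓ => π ℓ = π k)).erase k, R ℓ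
  have hc_pos : (0 : ℂ) < c := by rw [hc]; exact_mod_cast by positivity
  have hD : ∀ k, (D k).PosDef := fun k =>
    Matrix.PosDef.posSemidef_add (hR k) (Matrix.PosDef.one.smul hc_pos)
  have hS : ∀ k, (S k).PosSemidef := fun k => Matrix.posSemidef_sum _ fun ℓ _ => hR ℓ
  have hCDS : ∀ k, C k = D k + S k := fun k => by
    have hk : k ∈ Finset.univ.filter (fun ℓ => π ℓ = π k) := by simp
    rw [hC k, ← Finset.add_sum_erase _ R hk]
    simp only [D, S]
    abel
  refine ⟨Finset.sum_le_sum fun k _ => ?_, fun horth => Finset.sum_congr rfl fun k _ => ?_⟩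
  · rw [hCDS k]
    exact Matrix.trace_sub_mul_inv_mul_le_add (hR k).isHermitian (hD k) (hS k)
  · have hSR : S k * R k = 0 := by
      refine (Finset.sum_mul ..).trans (Finset.sum_eq_zero fun ℓ hℓ => ?_)
      obtain ⟨hℓk, hℓ⟩ := Finset.mem_erase.mp hℓ
      exact (hR ℓ).mul_eq_zero_of_trace_mul_eq_zero (hR k)
        (horth ℓ k hℓk (Finset.mem_filter.mp hℓ).2)
    have hRD : Commute (R k) (D k) :=
      (Commute.refl _).add_right ((Commute.one_right _).smul_right _)
    rw [hCDS k, mul_assoc, Matrix.inv_add_mul_eq_inv_mul_of_mul_eq_zero (hD k).isUnit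
      ((hD k).add_posSemidef (hS k)).isUnit hRD hSR, ← mul_assoc]
end

section
/- Let (Ω, ℱ, P) be a probability space. Let a : Ω → ℂ^K, n : Ω → ℂ^M, and G̃ : Ω → ℂ^{M×K} be square-integrable random elements which are mutually independent, with E[a] = 0, E[a·aᴴ] = I_K, E[n] = 0, E[n·nᴴ] = I_M, E[G̃] = 0, and E[g̃_k·g̃_kᴴ] = R_{g̃_k} for each column g̃_k of G̃. Let Ĝ ∈ ℂ^{M×K} be a fixed matrix and ρ > 0. Then for every W ∈ ℂ^{M×K}, E[‖Wᵀ·((Ĝ + G̃)·a + ρ^{-1/2}·n) − a‖²] = Re trace(Wᵀ·(Ĝ·Ĝᴴ + Σ_{k=1}^{K} R_{g̃_k} + (1/ρ)·I_M)·W* + I_K − Wᵀ·Ĝ − Ĝᴴ·W*). -/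
/-!
The detection error is linear in the stacked vector `F = (a, (g̃ᵢⱼ aⱼ)₍ᵢ,ⱼ₎, n)`: it is `C F` with
`C = [WᵀĜ - I | B | ρ^{-1/2} Wᵀ]`, where `B k (i, j) = W i k`, so the mean square error is
`Re tr (C E[F Fᴴ] Cᴴ)`. Since `G̃` is centred and independent of `a`, and `n` is centred and
independent of `(a, G̃)`, the three blocks of `F` are uncorrelated, and independence also gives
`E[(g̃ᵢⱼ aⱼ)(g̃ᵢ'ⱼ' aⱼ')*] = E[g̃ᵢⱼ g̃ᵢ'ⱼ'*] δⱼⱼ'`. So `E[F Fᴴ]` is block diagonal with blocks `I_K`,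
`blockDiagonal R` and `I_M`, and expanding `C E[F Fᴴ] Cᴴ` block by block gives the formula.
-/

open scoped ComplexOrder
open Matrix MeasureTheory ProbabilityTheory

/-- A three-member family of types, used to state mutual independence of three random
elements with different codomains. -/
def fam3 (α β γ : Type) : Fin 3 → Type := ![α, β, γ]

instance fam3.instMeasurableSpace {α β γ : Type} [MeasurableSpace α] [MeasurableSpace β]
    [MeasurableSpace γ] : ∀ i, MeasurableSpace (fam3 α β γ i) :=
  Fin.cons ‹MeasurableSpace α› (Fin.cons ‹MeasurableSpace β›
    (Fin.cons ‹MeasurableSpace γ› finZeroElim))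

/-- Bundle three random elements into a dependent family indexed by `Fin 3`. -/
def fam3.mk {Ω α β γ : Type} (a : Ω → α) (b : Ω → β) (c : Ω → γ) :
    ∀ i, Ω → fam3 α β γ i :=
  Fin.cons a (Fin.cons b (Fin.cons c finZeroElim))

/-- Entrywise complex conjugate of a matrix. -/
def mconj {m n : Type*} (A : Matrix m n ℂ) : Matrix m n ℂ := A.map (starRingEnd ℂ)

section CrossMoment

variable {Ω 𝕜 ι κ ι' : Type*} [MeasurableSpace Ω] [RCLike 𝕜] {P : Measure Ω}

noncomputable def crossMoment (P : Measure Ω) (X : Ω → ι → 𝕜) (Y : Ω → κ → 𝕜) : Matrix ι κ 𝕜 :=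
  Matrix.of fun i j => ∫ ω, X ω i * starRingEnd 𝕜 (Y ω j) ∂P

lemma conjTranspose_crossMoment (X : Ω → ι → 𝕜) (Y : Ω → κ → 𝕜) :
    (crossMoment P X Y)ᴴ = crossMoment P Y X := by
  ext i j
  simp [crossMoment, ← integral_conj, mul_comm]

lemma crossMoment_sumElim_left (X : Ω → ι → 𝕜) (Y : Ω → ι' → 𝕜) (Z : Ω → κ → 𝕜) :
    crossMoment P (fun ω => Sum.elim (X ω) (Y ω)) Z =
      fromRows (crossMoment P X Z) (crossMoment P Y Z) := by
  ext (i | i) j <;> rfl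

lemma crossMoment_sumElim_right (X : Ω → ι → 𝕜) (Y : Ω → κ → 𝕜) (Z : Ω → ι' → 𝕜) :
    crossMoment P X (fun ω => Sum.elim (Y ω) (Z ω)) =
      fromCols (crossMoment P X Y) (crossMoment P X Z) := by
  ext i (j | j) <;> rfl

lemma fromCols_mul_crossMoment_sumElim_mul_conjTranspose {μ : Type*} [Fintype ι] [Fintype ι']
    (A : Matrix μ ι 𝕜) (B : Matrix μ ι' 𝕜) (X : Ω → ι → 𝕜) (Y : Ω → ι' → 𝕜)
    (hXY : crossMoment P X Y = 0) :
    fromCols A B * crossMoment P (fun ω => Sum.elim (X ω) (Y ω)) (fun ω => Sum.elim (X ω) (Y ω))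
        * (fromCols A B)ᴴ =
      A * crossMoment P X X * Aᴴ + B * crossMoment P Y Y * Bᴴ := by
  have hYX : crossMoment P Y X = 0 := by rw [← conjTranspose_crossMoment, hXY, conjTranspose_zero]
  rw [crossMoment_sumElim_left, crossMoment_sumElim_right, crossMoment_sumElim_right, hXY, hYX,
    fromCols_mul_fromRows, conjTranspose_fromCols_eq_fromRows_conjTranspose]
  simp only [Matrix.add_mul, Matrix.mul_assoc, fromCols_mul_fromRows, Matrix.zero_mul, add_zero,
    zero_add]

lemma sum_norm_sq_mulVec [Fintype ι] [Fintype κ] (C : Matrix κ ι 𝕜) (v : ι → 𝕜) :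
    ∑ k, ‖(C *ᵥ v) k‖ ^ 2 = RCLike.re (∑ k, ∑ i, ∑ j,
      C k i * (v i * starRingEnd 𝕜 (v j)) * starRingEnd 𝕜 (C k j)) := by
  rw [map_sum]
  refine Finset.sum_congr rfl fun k _ => ?_
  rw [← RCLike.ofReal_re (K := 𝕜) (_ ^ 2), RCLike.ofReal_pow, ← RCLike.mul_conj]
  congr 1
  simp only [mulVec, dotProduct, map_sum, map_mul, Finset.sum_mul_sum]
  exact Finset.sum_congr rfl fun i _ => Finset.sum_congr rfl fun j _ => by ring

lemma integral_sum_norm_sq_mulVec [Fintype ι] [Fintype κ] {F : Ω → ι → 𝕜}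
    (hF : ∀ i, MemLp (fun ω => F ω i) 2 P) (C : Matrix κ ι 𝕜) :
    ∫ ω, ∑ k, ‖(C *ᵥ F ω) k‖ ^ 2 ∂P = RCLike.re (C * crossMoment P F F * Cᴴ).trace := by
  have hterm : ∀ k i j, Integrable
      (fun ω => C k i * (F ω i * starRingEnd 𝕜 (F ω j)) * starRingEnd 𝕜 (C k j)) P :=
    fun k i j => (((hF i).integrable_mul (hF j).star).const_mul _).mul_const _
  have hrow : ∀ k i, Integrable (fun ω => ∑ j,
      C k i * (F ω i * starRingEnd 𝕜 (F ω j)) * starRingEnd 𝕜 (C k j)) P :=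
    fun k i => integrable_finsetSum _ fun j _ => hterm k i j
  have hmat : ∀ k, Integrable (fun ω => ∑ i, ∑ j,
      C k i * (F ω i * starRingEnd 𝕜 (F ω j)) * starRingEnd 𝕜 (C k j)) P :=
    fun k => integrable_finsetSum _ fun i _ => hrow k i
  simp_rw [sum_norm_sq_mulVec]
  rw [integral_re (integrable_finsetSum _ fun k _ => hmat k),
    integral_finsetSum _ fun k _ => hmat k]
  simp only [trace, diag, mul_apply, conjTranspose_apply, crossMoment, of_apply, Finset.sum_mul,
    RCLike.star_def]
  refine congrArg _ (Finset.sum_congr rfl fun k _ => ?_)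
  rw [integral_finsetSum _ fun i _ => hrow k i, Finset.sum_comm]
  refine Finset.sum_congr rfl fun i _ => ?_
  rw [integral_finsetSum _ fun j _ => hterm k i j]
  exact Finset.sum_congr rfl fun j _ => by rw [integral_mul_const, integral_const_mul]

end CrossMoment

section Independence

variable {Ω 𝕜 α β ι κ : Type*} [MeasurableSpace Ω] [RCLike 𝕜] {P : Measure Ω}
  [MeasurableSpace α] [MeasurableSpace β]

lemma MeasureTheory.MemLp.mul_of_indepFun {X Y : Ω → 𝕜} (hX : MemLp X 2 P) (hY : MemLp Y 2 P)
    (hXY : IndepFun X Y P) : MemLp (X * Y) 2 P := by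
  have hsq : IndepFun (fun ω => ‖X ω‖ ^ 2) (fun ω => ‖Y ω‖ ^ 2) P :=
    hXY.comp (φ := fun x => ‖x‖ ^ 2) (ψ := fun y => ‖y‖ ^ 2) (by fun_prop) (by fun_prop)
  rw [memLp_two_iff_integrable_sq_norm (hX.1.mul hY.1)]
  refine (hsq.integrable_mul ?_ ?_).congr (ae_of_all _ fun ω => ?_)
  · exact (memLp_two_iff_integrable_sq_norm hX.1).1 hX
  · exact (memLp_two_iff_integrable_sq_norm hY.1).1 hY
  · simp [norm_mul, mul_pow]

lemma ProbabilityTheory.IndepFun.integral_comp_mul_comp_eq_zero {U : Ω → α} {V : Ω → β}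
    (hUV : IndepFun U V P) (hU : AEMeasurable U P) (hV : AEMeasurable V P) {f : α → 𝕜} {g : β → 𝕜}
    (hf : Measurable f) (hg : Measurable g) (hg0 : ∫ ω, g (V ω) ∂P = 0) :
    ∫ ω, f (U ω) * g (V ω) ∂P = 0 := by
  rw [hUV.integral_fun_comp_mul_comp hU hV hf.aestronglyMeasurable hg.aestronglyMeasurable, hg0,
    mul_zero]

lemma ProbabilityTheory.IndepFun.crossMoment_mul_comp {X : Ω → ι → 𝕜} {Y : Ω → κ → 𝕜}
    (hXY : IndepFun X Y P) (hX : AEMeasurable X P) (hY : AEMeasurable Y P) (σ : ι → κ) :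
    crossMoment P (fun ω i => X ω i * Y ω (σ i)) (fun ω i => X ω i * Y ω (σ i)) =
      of fun i j => crossMoment P X X i j * crossMoment P Y Y (σ i) (σ j) := by
  ext i j
  have hf : Measurable fun x : ι → 𝕜 => x i * starRingEnd 𝕜 (x j) :=
    (measurable_pi_apply i).mul (RCLike.continuous_conj.measurable.comp (measurable_pi_apply j))
  have hg : Measurable fun y : κ → 𝕜 => y (σ i) * starRingEnd 𝕜 (y (σ j)) :=
    (measurable_pi_apply _).mul (RCLike.continuous_conj.measurable.comp (measurable_pi_apply _))
  rw [of_apply, crossMoment, crossMoment, crossMoment, of_apply, of_apply, of_apply,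
    ← hXY.integral_fun_comp_mul_comp hX hY hf.aestronglyMeasurable hg.aestronglyMeasurable]
  congr 1 with ω
  simp only [map_mul]
  ring

lemma ProbabilityTheory.IndepFun.crossMoment_comp_eq_zero {U : Ω → α} {Y : Ω → κ → 𝕜}
    (hUY : IndepFun U Y P) (hU : AEMeasurable U P) (hY : AEMeasurable Y P) {φ : α → ι → 𝕜}
    (hφ : Measurable φ) (hY0 : ∀ j, ∫ ω, Y ω j ∂P = 0) :
    crossMoment P (fun ω => φ (U ω)) Y = 0 := by
  ext i j
  exact hUY.integral_comp_mul_comp_eq_zero (g := fun y => starRingEnd 𝕜 (y j)) hU hY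
    ((measurable_pi_apply i).comp hφ)
    (RCLike.continuous_conj.measurable.comp (measurable_pi_apply j))
    (by rw [integral_conj, hY0, map_zero])

lemma ProbabilityTheory.IndepFun.crossMoment_mul_comp_eq_zero {X : Ω → κ → 𝕜} {Z : Ω → ι → 𝕜}
    (hXZ : IndepFun X Z P) (hX : AEMeasurable X P) (hZ : AEMeasurable Z P)
    (hZ0 : ∀ i, ∫ ω, Z ω i ∂P = 0) (σ : ι → κ) :
    crossMoment P X (fun ω i => Z ω i * X ω (σ i)) = 0 := by
  ext j i
  have hf : Measurable fun x : κ → 𝕜 => x j * starRingEnd 𝕜 (x (σ i)) :=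
    (measurable_pi_apply j).mul (RCLike.continuous_conj.measurable.comp (measurable_pi_apply _))
  rw [crossMoment, of_apply, Matrix.zero_apply, ← hXZ.integral_comp_mul_comp_eq_zero
    (g := fun z => starRingEnd 𝕜 (z i)) hX hZ hf
    (RCLike.continuous_conj.measurable.comp (measurable_pi_apply i))
    (by rw [integral_conj, hZ0, map_zero])]
  congr 1 with ω
  simp only [map_mul]
  ring

end Independence

section ReceiverAlgebra

variable {l m k α : Type*}

/-- The detection error is linear in this vector, and its second-moment matrix is known. -/
def receiverInput [Mul α] (x : k → α) (z : m → α) (G : m → k → α) : k ⊕ m × k ⊕ m → α :=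
  Sum.elim x (Sum.elim (fun q => G q.1 q.2 * x q.2) z)

lemma transpose_mulVec_add_sub_eq_fromCols_mulVec [Fintype m] [Fintype k] [DecidableEq k]
    [CommRing α] (W Ghat : Matrix m k α) (G : m → k → α) (c : α) (x : k → α) (z : m → α) :
    Wᵀ *ᵥ ((Ghat + of G) *ᵥ x + c • z) - x =
      fromCols (Wᵀ * Ghat - 1) (fromCols (Wᵀ.submatrix id Prod.fst) (c • Wᵀ)) *ᵥ
        receiverInput x z G := by
  have hG : Wᵀ.submatrix id Prod.fst *ᵥ (fun q => G q.1 q.2 * x q.2) = Wᵀ *ᵥ (of G *ᵥ x) := by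
    ext i
    simp only [mulVec, dotProduct, submatrix_apply, id, transpose_apply, of_apply,
      Fintype.sum_prod_type, Finset.mul_sum]
  rw [receiverInput, fromCols_mulVec_sumElim, fromCols_mulVec_sumElim, hG, sub_mulVec,
    one_mulVec, ← mulVec_mulVec, smul_mulVec, add_mulVec, mulVec_add, mulVec_add, mulVec_smul]
  abel

lemma submatrix_fst_mul_blockDiagonal_mul_conjTranspose [Fintype m] [Fintype k] [DecidableEq k]
    [CommSemiring α] [StarRing α] (A : Matrix l m α) (R : k → Matrix m m α) :
    (A.submatrix id Prod.fst : Matrix l (m × k) α) * blockDiagonal R *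
        (A.submatrix id Prod.fst : Matrix l (m × k) α)ᴴ =
      A * (∑ j, R j) * Aᴴ := by
  ext i i'
  simp only [mul_apply, blockDiagonal_apply, submatrix_apply, id, conjTranspose_apply,
    Fintype.sum_prod_type, mul_ite, mul_zero, Finset.sum_ite_eq', Finset.mem_univ, if_true,
    Matrix.sum_apply, Finset.mul_sum, Finset.sum_mul]
  exact Finset.sum_congr rfl fun _ _ => Finset.sum_comm

lemma mconj_eq_transpose_conjTranspose (W : Matrix m k ℂ) : mconj W = Wᵀᴴ := by
  ext; rfl

lemma receiver_mse_matrix_eq [Fintype m] [Fintype k] [DecidableEq m] [DecidableEq k]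
    (W Ghat : Matrix m k ℂ) (R : k → Matrix m m ℂ) {c s : ℂ} (hc : c * star c = s) :
    (Wᵀ * Ghat - 1) * (Wᵀ * Ghat - 1)ᴴ +
        ((Wᵀ.submatrix id Prod.fst : Matrix k (m × k) ℂ) * blockDiagonal R *
          (Wᵀ.submatrix id Prod.fst : Matrix k (m × k) ℂ)ᴴ + (c • Wᵀ) * (c • Wᵀ)ᴴ) =
      Wᵀ * (Ghat * Ghatᴴ + ∑ j, R j + s • 1) * mconj W + 1 - Wᵀ * Ghat - Ghatᴴ * mconj W := by
  rw [submatrix_fst_mul_blockDiagonal_mul_conjTranspose, mconj_eq_transpose_conjTranspose,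
    conjTranspose_sub, conjTranspose_mul, conjTranspose_one, conjTranspose_smul, Matrix.smul_mul,
    Matrix.mul_smul, smul_smul, hc]
  simp only [Matrix.mul_add, Matrix.add_mul, Matrix.sub_mul, Matrix.mul_sub, Matrix.mul_one,
    Matrix.one_mul, Matrix.mul_smul, Matrix.smul_mul, Matrix.mul_assoc]
  abel

end ReceiverAlgebra

section ReceiverInput

variable {Ω m k : Type*} [MeasurableSpace Ω] {P : Measure Ω} [Fintype m] [Fintype k]
  {a : Ω → k → ℂ} {n : Ω → m → ℂ} {G : Ω → m → k → ℂ}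

lemma memLp_receiverInput (ha : MemLp a 2 P) (hn : MemLp n 2 P) (hG : MemLp G 2 P)
    (haG : IndepFun a G P) : ∀ i, MemLp (fun ω => receiverInput (a ω) (n ω) (G ω) i) 2 P
  | .inl j => ha.eval j
  | .inr (.inl q) => ((hG.eval q.1).eval q.2).mul_of_indepFun (ha.eval q.2)
      (haG.symm.comp ((measurable_pi_apply q.2).comp (measurable_pi_apply q.1))
        (measurable_pi_apply q.2))
  | .inr (.inr p) => hn.eval p

lemma fromCols_mul_crossMoment_receiverInput_mul_conjTranspose [DecidableEq m] [DecidableEq k]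
    {l : Type*} (ha : AEMeasurable a P) (hn : AEMeasurable n P) (hG : AEMeasurable G P)
    (haG : IndepFun a G P) (hagn : IndepFun (fun ω => (a ω, G ω)) n P)
    (hnMean : ∀ i, ∫ ω, n ω i ∂P = 0) (hGMean : ∀ i j, ∫ ω, G ω i j ∂P = 0)
    (haCov : crossMoment P a a = 1) (hnCov : crossMoment P n n = 1) {R : k → Matrix m m ℂ}
    (hGCov : ∀ j i i', ∫ ω, G ω i j * starRingEnd ℂ (G ω i' j) ∂P = R j i i')
    (A : Matrix l k ℂ) (B : Matrix l (m × k) ℂ) (D : Matrix l m ℂ) :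
    fromCols A (fromCols B D) *
        crossMoment P (fun ω => receiverInput (a ω) (n ω) (G ω))
          (fun ω => receiverInput (a ω) (n ω) (G ω)) *
        (fromCols A (fromCols B D) : Matrix l (k ⊕ m × k ⊕ m) ℂ)ᴴ =
      A * Aᴴ + (B * blockDiagonal R * Bᴴ + D * Dᴴ) := by
  set GX : Ω → m × k → ℂ := fun ω q => G ω q.1 q.2 * a ω q.2
  have hvec : Measurable fun (g : m → k → ℂ) (q : m × k) => g q.1 q.2 := by fun_prop
  have hvecG : AEMeasurable (fun ω (q : m × k) => G ω q.1 q.2) P := hvec.comp_aemeasurable hG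
  have hGa : IndepFun (fun ω (q : m × k) => G ω q.1 q.2) a P := haG.symm.comp hvec measurable_id
  have hGXGX : crossMoment P GX GX = blockDiagonal R := by
    rw [hGa.crossMoment_mul_comp hvecG ha Prod.snd, haCov]
    ext ⟨i, j⟩ ⟨i', j'⟩
    by_cases h : j = j'
    · subst h; simp [crossMoment, hGCov]
    · simp [h, blockDiagonal_apply']
  have haGX : crossMoment P a GX = 0 :=
    hGa.symm.crossMoment_mul_comp_eq_zero ha hvecG (fun q => hGMean q.1 q.2) Prod.snd
  have han : crossMoment P a n = 0 :=
    hagn.crossMoment_comp_eq_zero (ha.prodMk hG) hn measurable_fst hnMean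
  have hGXn : crossMoment P GX n = 0 :=
    hagn.crossMoment_comp_eq_zero (φ := fun x (q : m × k) => x.2 q.1 q.2 * x.1 q.2)
      (ha.prodMk hG) hn (by fun_prop) hnMean
  unfold receiverInput
  rw [fromCols_mul_crossMoment_sumElim_mul_conjTranspose _ _ _ _ (by
      rw [crossMoment_sumElim_right, haGX, han, fromCols_zero]),
    fromCols_mul_crossMoment_sumElim_mul_conjTranspose _ _ _ _ hGXn, haCov, hGXGX, hnCov,
    Matrix.mul_one, Matrix.mul_one]

end ReceiverInput

theorem ul_mse_sd_formula_general
    {Ω : Type} [MeasurableSpace Ω] (P : Measure Ω)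
    {M K : ℕ}
    (a : Ω → Fin K → ℂ) (n : Ω → Fin M → ℂ) (Gt : Ω → Fin M → Fin K → ℂ)
    (ha2 : MemLp a 2 P) (hn2 : MemLp n 2 P) (hGt2 : MemLp Gt 2 P)
    (hindep : iIndepFun (fam3.mk a n Gt) P)
    (haCov : ∀ k k', ∫ ω, a ω k * (starRingEnd ℂ) (a ω k') ∂P = if k = k' then 1 else 0)
    (hnMean : ∀ i, ∫ ω, n ω i ∂P = 0)
    (hnCov : ∀ i i', ∫ ω, n ω i * (starRingEnd ℂ) (n ω i') ∂P = if i = i' then 1 else 0)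
    (hGtMean : ∀ i k, ∫ ω, Gt ω i k ∂P = 0)
    (R : Fin K → Matrix (Fin M) (Fin M) ℂ)
    (hGtCov : ∀ k i j, ∫ ω, Gt ω i k * (starRingEnd ℂ) (Gt ω j k) ∂P = R k i j)
    (Ghat : Matrix (Fin M) (Fin K) ℂ) (ρ : ℝ) (hρ : 0 < ρ) :
    ∀ W : Matrix (Fin M) (Fin K) ℂ,
      ∫ ω, (∑ k, ‖(Wᵀ *ᵥ (((Ghat + Matrix.of (Gt ω)) *ᵥ a ω)
          + (Real.sqrt ρ)⁻¹ • n ω) - a ω) k‖ ^ 2) ∂P =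
      ((Wᵀ * (Ghat * Ghatᴴ + ∑ k, R k + ((1 / ρ : ℝ) : ℂ) • 1) * mconj W
          + 1 - Wᵀ * Ghat - Ghatᴴ * mconj W).trace).re := by
  intro W
  have hc : (((√ρ)⁻¹ : ℝ) : ℂ) * star (((√ρ)⁻¹ : ℝ) : ℂ) = ((1 / ρ : ℝ) : ℂ) := by
    rw [Complex.star_def, Complex.conj_ofReal, ← Complex.ofReal_mul, ← mul_inv,
      Real.mul_self_sqrt hρ.le, one_div]
  have hmeas : ∀ i, AEMeasurable (fam3.mk a n Gt i) P := by
    intro i; fin_cases i; exacts [ha2.1.aemeasurable, hn2.1.aemeasurable, hGt2.1.aemeasurable]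
  have haG : IndepFun a Gt P := hindep.indepFun (i := 0) (j := 2) (by decide)
  have hagn : IndepFun (fun ω => (a ω, Gt ω)) n P :=
    hindep.indepFun_prodMk₀ hmeas 0 2 1 (by decide) (by decide)
  simp_rw [RCLike.real_smul_eq_coe_smul (K := ℂ), transpose_mulVec_add_sub_eq_fromCols_mulVec]
  rw [integral_sum_norm_sq_mulVec (memLp_receiverInput ha2 hn2 hGt2 haG),
    fromCols_mul_crossMoment_receiverInput_mul_conjTranspose ha2.1.aemeasurable hn2.1.aemeasurable
      hGt2.1.aemeasurable haG hagn hnMean hGtMean (by ext; exact haCov _ _)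
      (by ext; exact hnCov _ _) hGtCov]
  exact congrArg (fun X => RCLike.re X.trace) (receiver_mse_matrix_eq W Ghat R hc)

/-- The uplink mean square error of signal detection of a linear receiver `W`:
if `a`, `n`, `G̃` are mutually independent and square integrable with `E[a] = 0`,
`E[a aᴴ] = I_K`, `E[n] = 0`, `E[n nᴴ] = I_M`, `E[G̃] = 0`, `E[g̃ₖ g̃ₖᴴ] = R k`, then
`E‖Wᵀ((Ĝ+G̃)a + ρ^{-1/2} n) − a‖² =
  Re trace (Wᵀ (Ĝ Ĝᴴ + ∑ₖ R k + (1/ρ) I) W* + I − Wᵀ Ĝ − Ĝᴴ W*)`. -/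
theorem ul_mse_sd_formula
    {Ω : Type} [MeasurableSpace Ω] (P : Measure Ω) [IsProbabilityMeasure P]
    {M K : ℕ}
    (a : Ω → Fin K → ℂ) (n : Ω → Fin M → ℂ) (Gt : Ω → Fin M → Fin K → ℂ)
    (ha2 : MemLp a 2 P) (hn2 : MemLp n 2 P) (hGt2 : MemLp Gt 2 P)
    (hindep : iIndepFun (fam3.mk a n Gt) P)
    (haMean : ∀ k, ∫ ω, a ω k ∂P = 0)
    (haCov : ∀ k k', ∫ ω, a ω k * (starRingEnd ℂ) (a ω k') ∂P = if k = k' then 1 else 0)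
    (hnMean : ∀ i, ∫ ω, n ω i ∂P = 0)
    (hnCov : ∀ i i', ∫ ω, n ω i * (starRingEnd ℂ) (n ω i') ∂P = if i = i' then 1 else 0)
    (hGtMean : ∀ i k, ∫ ω, Gt ω i k ∂P = 0)
    (R : Fin K → Matrix (Fin M) (Fin M) ℂ)
    (hGtCov : ∀ k i j, ∫ ω, Gt ω i k * (starRingEnd ℂ) (Gt ω j k) ∂P = R k i j)
    (Ghat : Matrix (Fin M) (Fin K) ℂ) (ρ : ℝ) (hρ : 0 < ρ) :
    ∀ W : Matrix (Fin M) (Fin K) ℂ,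
      ∫ ω, (∑ k, ‖(Wᵀ *ᵥ (((Ghat + Matrix.of (Gt ω)) *ᵥ a ω)
          + (Real.sqrt ρ)⁻¹ • n ω) - a ω) k‖ ^ 2) ∂P =
      ((Wᵀ * (Ghat * Ghatᴴ + ∑ k, R k + ((1 / ρ : ℝ) : ℂ) • 1) * mconj W
          + 1 - Wᵀ * Ghat - Ghatᴴ * mconj W).trace).re :=
  ul_mse_sd_formula_general P a n Gt ha2 hn2 hGt2 hindep haCov hnMean hnCov hGtMean R hGtCov Ghat ρ
    hρ
end

section
/- (Theorem 3) Let Ĝ be a nonzero M×K complex matrix, let R̃ be an M×M complex Hermitian positive semidefinite matrix, let ρ > 0 and K ≥ 1; set D = R̃ + (1/ρ)·I_M and C = Ĝ·Ĝᴴ + D. Define, for B ∈ ℂ^{M×K} and α ∈ ℝ, ε(B, α) = Re trace(α²·Bᴴ·(Ĝ*·Ĝᵀ + R̃*)·B − α·Ĝᵀ·B − α·Bᴴ·Ĝ*) + (α²/ρ + 1)·K. Let γ = √(trace(Ĝᴴ·C⁻²·Ĝ)/K) (which is positive), B_opt = (1/γ)·(C⁻¹·Ĝ)*, and α_opt = γ.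 Then trace(B_opt·B_optᴴ) = K, and (B_opt, α_opt) is a global minimizer of ε over the feasible set {(B, α) : trace(B·Bᴴ) ≤ K, α ∈ ℝ}, with minimum value ε(B_opt, α_opt) = trace((I_K + Ĝᴴ·D⁻¹·Ĝ)⁻¹). -/
open scoped ComplexOrder
open Matrix

/-!
With `W = B*` the MSE is a quadratic form in `α W`. Completing the square with
`C = Ĝ Ĝᴴ + R̃ + ρ⁻¹ I` and `X = C⁻¹ Ĝ` gives
`ε(B, α) = Re tr ((α W - X)ᴴ C (α W - X)) + (α² / ρ) (K - tr (B Bᴴ)) + K - Re tr (Ĝᴴ X)`,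
where both leading terms are nonnegative on the feasible set and vanish at `α W = X`,
`tr (B Bᴴ) = K`; the scaling `γ` is what makes the latter two conditions compatible.
The push-through identity `Ĝᴴ (Ĝ Ĝᴴ + D)⁻¹ Ĝ = I - (I + Ĝᴴ D⁻¹ Ĝ)⁻¹` turns the minimum
into `tr ((I + Ĝᴴ D⁻¹ Ĝ)⁻¹)`.
-/

section mconj

variable {m n p : Type*}

@[simp]
lemma mconj_mconj (A : Matrix m n ℂ) : mconj (mconj A) = A := by
  ext; simp [mconj]

@[simp]
lemma mconj_add (A B : Matrix m n ℂ) : mconj (A + B) = mconj A + mconj B :=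
  Matrix.map_add _ (map_add _) A B

@[simp]
lemma mconj_sub (A B : Matrix m n ℂ) : mconj (A - B) = mconj A - mconj B :=
  Matrix.map_sub _ (map_sub _) A B

@[simp]
lemma mconj_mul [Fintype n] (A : Matrix m n ℂ) (B : Matrix n p ℂ) :
    mconj (A * B) = mconj A * mconj B :=
  Matrix.map_mul

@[simp]
lemma mconj_smul_real (r : ℝ) (A : Matrix m n ℂ) : mconj (r • A) = r • mconj A := by
  ext; simp [mconj, Complex.real_smul]

@[simp]
lemma mconj_conjTranspose (A : Matrix m n ℂ) : mconj Aᴴ = Aᵀ := by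
  ext; simp [mconj]

@[simp]
lemma mconj_transpose (A : Matrix m n ℂ) : mconj Aᵀ = Aᴴ := by
  ext; simp [mconj]

@[simp]
lemma conjTranspose_mconj (A : Matrix m n ℂ) : (mconj A)ᴴ = Aᵀ := by
  ext; simp [mconj]

lemma trace_mconj [Fintype n] (A : Matrix n n ℂ) : (mconj A).trace = star A.trace := by
  simp [Matrix.trace, mconj]

lemma re_trace_mconj [Fintype n] (A : Matrix n n ℂ) : (mconj A).trace.re = A.trace.re := by
  rw [trace_mconj]
  exact Complex.conj_re _

end mconj

section trace

variable {m n : Type*} [Fintype m] [Fintype n]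

lemma Matrix.IsHermitian.coe_re_trace {A : Matrix n n ℂ} (hA : A.IsHermitian) :
    (A.trace.re : ℂ) = A.trace :=
  Complex.conj_eq_iff_re.mp <| by rw [← Complex.star_def, ← trace_conjTranspose, hA.eq]

lemma re_trace_conjTranspose_mul_self_pos {X : Matrix m n ℂ} (hX : X ≠ 0) :
    0 < (Xᴴ * X).trace.re :=
  (Complex.pos_iff.mp <| (posSemidef_conjTranspose_mul_self X).trace_nonneg.lt_of_ne'
    (trace_conjTranspose_mul_self_eq_zero_iff.not.mpr hX)).1

lemma trace_smul_mconj_mul_conjTranspose (r : ℝ) (X : Matrix m n ℂ) :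
    ((r • mconj X) * (r • mconj X)ᴴ).trace = ((r ^ 2 * (Xᴴ * X).trace.re : ℝ) : ℂ) := by
  have hXX : mconj X * (mconj X)ᴴ = mconj (X * Xᴴ) := by simp
  rw [conjTranspose_smul, star_trivial, Matrix.smul_mul, Matrix.mul_smul, smul_smul, hXX,
    trace_smul, trace_mconj, trace_mul_comm, ← (isHermitian_conjTranspose_mul_self X).coe_re_trace,
    Complex.star_def, Complex.conj_ofReal, Complex.real_smul]
  push_cast [Complex.ofReal_re]
  ring

end trace

lemma Matrix.PosSemidef.add_smul_one_posDef {n : Type*} [Fintype n] [DecidableEq n]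
    {R : Matrix n n ℂ} (hR : R.PosSemidef) {r : ℝ} (hr : 0 < r) :
    (R + (r : ℂ) • 1).PosDef :=
  PosDef.posSemidef_add hR (PosDef.one.smul (Complex.zero_lt_real.mpr hr))

section pushThrough

variable {α : Type*} [CommRing α] {m n : Type*} [Fintype m] [DecidableEq m] [Fintype n]
  [DecidableEq n]

lemma mul_inv_add_mul_eq_one_sub_inv (U : Matrix m n α) (V : Matrix n m α) {D : Matrix m m α}
    (hD : IsUnit D.det) (hC : IsUnit (U * V + D).det) (hS : IsUnit (1 + V * D⁻¹ * U).det) :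
    V * (U * V + D)⁻¹ * U = 1 - (1 + V * D⁻¹ * U)⁻¹ := by
  set S := 1 + V * D⁻¹ * U
  have hCDU : (U * V + D) * (D⁻¹ * U) = U * S := by
    rw [Matrix.add_mul, mul_nonsing_inv_cancel_left _ _ hD, Matrix.mul_add, Matrix.mul_one,
      add_comm]
    simp only [Matrix.mul_assoc]
  have hCU : (U * V + D)⁻¹ * U = D⁻¹ * U * S⁻¹ := by
    rw [← nonsing_inv_mul_cancel_left _ (D⁻¹ * U) hC, hCDU, Matrix.mul_assoc,
      mul_nonsing_inv_cancel_right _ _ hS]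
  have hVDU : V * D⁻¹ * U = S - 1 := (add_sub_cancel_left 1 _).symm
  rw [Matrix.mul_assoc, hCU, ← Matrix.mul_assoc, ← Matrix.mul_assoc, hVDU, Matrix.sub_mul,
    mul_nonsing_inv _ hS, Matrix.one_mul]

lemma card_sub_re_trace_eq_trace_inv {D : Matrix m m ℂ} (hD : D.PosDef) (G : Matrix m n ℂ) :
    ((Fintype.card n - (Gᴴ * ((G * Gᴴ + D)⁻¹ * G)).trace.re : ℝ) : ℂ)
      = (1 + Gᴴ * D⁻¹ * G)⁻¹.trace := by
  have hS : (1 + Gᴴ * D⁻¹ * G).PosDef :=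
    PosDef.one.add_posSemidef (hD.inv.posSemidef.conjTranspose_mul_mul_same G)
  have hC : (G * Gᴴ + D).PosDef :=
    PosDef.posSemidef_add (posSemidef_self_mul_conjTranspose G) hD
  rw [← Matrix.mul_assoc, mul_inv_add_mul_eq_one_sub_inv G Gᴴ hD.det_pos.ne'.isUnit
    hC.det_pos.ne'.isUnit hS.det_pos.ne'.isUnit, trace_sub, trace_one,
    ← hS.inv.isHermitian.coe_re_trace]
  simp

end pushThrough

section completeSquare

variable {m n : Type*} [Fintype m]

lemma conjTranspose_smul_sub_mul_mul_smul_sub {C : Matrix m m ℂ} (hC : C.IsHermitian)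
    {G X : Matrix m n ℂ} (hX : C * X = G) (W : Matrix m n ℂ) (α : ℝ) :
    (α • W - X)ᴴ * C * (α • W - X)
      = (α ^ 2) • (Wᴴ * C * W) - α • (Wᴴ * G) - α • (Gᴴ * W) + Gᴴ * X := by
  have hXC : Xᴴ * C = Gᴴ := by rw [← hX, conjTranspose_mul, hC.eq]
  have hXCW : (α • W - X)ᴴ * C = α • (Wᴴ * C) - Gᴴ := by
    rw [conjTranspose_sub, conjTranspose_smul, star_trivial, Matrix.sub_mul, Matrix.smul_mul, hXC]
  rw [hXCW, Matrix.sub_mul, Matrix.mul_sub, Matrix.mul_sub, Matrix.smul_mul, Matrix.smul_mul,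
    Matrix.mul_smul, Matrix.mul_smul, Matrix.mul_assoc Wᴴ C X, hX, smul_smul, ← pow_two]
  abel

end completeSquare

section downlinkMSE

variable {m n : Type*} [Fintype m] [Fintype n]

/-- The downlink MSE `ε(B, α)`, with `K = card n`. -/
noncomputable def downlinkMSE (G : Matrix m n ℂ) (R : Matrix m m ℂ) (ρ : ℝ) (B : Matrix m n ℂ)
    (α : ℝ) : ℝ :=
  (((α ^ 2 : ℝ) • (Bᴴ * (mconj G * Gᵀ + mconj R) * B) - α • (Gᵀ * B)
    - α • (Bᴴ * mconj G)).trace).re + (α ^ 2 / ρ + 1) * Fintype.card n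

variable {G : Matrix m n ℂ} {R : Matrix m m ℂ} {ρ : ℝ}

lemma downlinkMSE_eq_mconj (B : Matrix m n ℂ) (α : ℝ) :
    downlinkMSE G R ρ B α = (((α ^ 2 : ℝ) • ((mconj B)ᴴ * (G * Gᴴ + R) * mconj B)
      - α • (Gᴴ * mconj B) - α • ((mconj B)ᴴ * G)).trace).re
      + (α ^ 2 / ρ + 1) * Fintype.card n := by
  rw [downlinkMSE, ← re_trace_mconj]
  simp

lemma downlinkMSE_eq_add [DecidableEq m] (hR : R.IsHermitian) {D C : Matrix m m ℂ}
    {X : Matrix m n ℂ} (hD : D = R + ((1 / ρ : ℝ) : ℂ) • 1) (hC : C = G * Gᴴ + D)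
    (hX : C * X = G) (B : Matrix m n ℂ) (α : ℝ) :
    downlinkMSE G R ρ B α = ((α • mconj B - X)ᴴ * C * (α • mconj B - X)).trace.re
      + α ^ 2 / ρ * (Fintype.card n - (B * Bᴴ).trace.re)
      + (Fintype.card n - (Gᴴ * X).trace.re) := by
  have hCh : C.IsHermitian := by
    rw [hC, hD, IsHermitian]
    simp [hR.eq]
  have hWCW : (mconj B)ᴴ * C * mconj B = (mconj B)ᴴ * (G * Gᴴ + R) * mconj B
      + (1 / ρ : ℝ) • ((mconj B)ᴴ * mconj B) := by
    rw [hC, hD, ← add_assoc, Matrix.mul_add, Matrix.add_mul, Matrix.mul_smul, Matrix.mul_one,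
      Matrix.smul_mul, Complex.coe_smul]
  have hWW : ((mconj B)ᴴ * mconj B).trace.re = (B * Bᴴ).trace.re := by
    rw [← re_trace_mconj, trace_mul_comm]
    simp
  rw [downlinkMSE_eq_mconj, conjTranspose_smul_sub_mul_mul_smul_sub hCh hX, hWCW, ← hWW]
  simp only [smul_add, trace_add, trace_sub, trace_smul, Complex.add_re, Complex.sub_re,
    Complex.smul_re, smul_eq_mul]
  ring

lemma sub_re_trace_le_downlinkMSE [DecidableEq m] (hR : R.PosSemidef) (hρ : 0 < ρ)
    {D C : Matrix m m ℂ} {X : Matrix m n ℂ} (hD : D = R + ((1 / ρ : ℝ) : ℂ) • 1)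
    (hC : C = G * Gᴴ + D) (hX : C * X = G) {B : Matrix m n ℂ}
    (hB : (B * Bᴴ).trace ≤ Fintype.card n) (α : ℝ) :
    Fintype.card n - (Gᴴ * X).trace.re ≤ downlinkMSE G R ρ B α := by
  have hCpsd : C.PosSemidef := hC ▸ hD ▸ (posSemidef_self_mul_conjTranspose G).add
    (hR.add_smul_one_posDef (one_div_pos.mpr hρ)).posSemidef
  have hsq : 0 ≤ ((α • mconj B - X)ᴴ * C * (α • mconj B - X)).trace.re :=
    (Complex.nonneg_iff.mp (hCpsd.conjTranspose_mul_mul_same _).trace_nonneg).1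
  have hpow : 0 ≤ α ^ 2 / ρ * (Fintype.card n - (B * Bᴴ).trace.re) :=
    mul_nonneg (by positivity) (sub_nonneg.mpr (by simpa using (Complex.le_def.mp hB).1))
  rw [downlinkMSE_eq_add hR.isHermitian hD hC hX]
  linarith

lemma downlinkMSE_eq_of_smul_mconj_eq [DecidableEq m] (hR : R.IsHermitian) {D C : Matrix m m ℂ}
    {X : Matrix m n ℂ} (hD : D = R + ((1 / ρ : ℝ) : ℂ) • 1) (hC : C = G * Gᴴ + D)
    (hX : C * X = G) {B : Matrix m n ℂ} {α : ℝ} (hBX : α • mconj B = X)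
    (hB : (B * Bᴴ).trace = Fintype.card n) :
    downlinkMSE G R ρ B α = Fintype.card n - (Gᴴ * X).trace.re := by
  rw [downlinkMSE_eq_add hR hD hC hX, hBX, hB, sub_self]
  simp

end downlinkMSE

/-- **Theorem 3 (robust downlink MMSE precoder).** With `D = R̃ + (1/ρ) I`,
`C = Ghat Ghatᴴ + D`, downlink MSE-SD
`ε (B, α) = Re trace (α² Bᴴ (Ghat* Ghatᵀ + R̃*) B − α Ghatᵀ B − α Bᴴ Ghat*) + (α²/ρ + 1) K`,
and `γ = √(trace (Ghatᴴ C⁻² Ghat) / K) > 0`, the pair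
`(Bopt, αopt) = ((1/γ)(C⁻¹ Ghat)*, γ)` satisfies the power constraint with equality and is a
global minimizer of `ε` over `{(B, α) : trace (B Bᴴ) ≤ K}`, with minimum value
`trace ((I + Ghatᴴ D⁻¹ Ghat)⁻¹)`. -/
theorem robust_mmse_precoder_optimal
    {M K : ℕ} (hK : 1 ≤ K)
    (Ghat : Matrix (Fin M) (Fin K) ℂ) (hGhat : Ghat ≠ 0)
    (Rt : Matrix (Fin M) (Fin M) ℂ) (hRt : Rt.PosSemidef)
    (ρ : ℝ) (hρ : 0 < ρ)
    (D : Matrix (Fin M) (Fin M) ℂ) (hD : D = Rt + ((1 / ρ : ℝ) : ℂ) • 1)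
    (C : Matrix (Fin M) (Fin M) ℂ) (hC : C = Ghat * Ghatᴴ + D)
    (ε : Matrix (Fin M) (Fin K) ℂ → ℝ → ℝ)
    (hε : ∀ B α, ε B α =
      (((α ^ 2 : ℝ) • (Bᴴ * (mconj Ghat * Ghatᵀ + mconj Rt) * B)
        - α • (Ghatᵀ * B) - α • (Bᴴ * mconj Ghat)).trace).re + (α ^ 2 / ρ + 1) * K)
    (γ : ℝ) (hγ : γ = Real.sqrt (((Ghatᴴ * C⁻¹ * C⁻¹ * Ghat).trace).re / K))
    (Bopt : Matrix (Fin M) (Fin K) ℂ) (hBopt : Bopt = γ⁻¹ • mconj (C⁻¹ * Ghat))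
    (αopt : ℝ) (hαopt : αopt = γ) :
    0 < γ ∧
    (Bopt * Boptᴴ).trace = (K : ℂ) ∧
    (∀ (B : Matrix (Fin M) (Fin K) ℂ) (α : ℝ),
      (B * Bᴴ).trace ≤ (K : ℂ) → ε Bopt αopt ≤ ε B α) ∧
    (ε Bopt αopt : ℂ) = ((1 + Ghatᴴ * D⁻¹ * Ghat)⁻¹).trace := by
  have hεmse : ε = downlinkMSE Ghat Rt ρ := by
    funext B α
    rw [hε, downlinkMSE, Fintype.card_fin]
  subst hεmse αopt
  have hK0 : (0 : ℝ) < K := by exact_mod_cast hK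
  have hDpd : D.PosDef := hD ▸ hRt.add_smul_one_posDef (one_div_pos.mpr hρ)
  have hCpd : C.PosDef :=
    hC ▸ PosDef.posSemidef_add (posSemidef_self_mul_conjTranspose Ghat) hDpd
  set X := C⁻¹ * Ghat with hXdef
  have hCX : C * X = Ghat := mul_nonsing_inv_cancel_left C Ghat hCpd.det_pos.ne'.isUnit
  have hX0 : X ≠ 0 := fun h => hGhat (by rw [← hCX, h, Matrix.mul_zero])
  have hXX0 := re_trace_conjTranspose_mul_self_pos hX0
  have hXX : Ghatᴴ * C⁻¹ * C⁻¹ * Ghat = Xᴴ * X := by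
    rw [conjTranspose_mul, hCpd.isHermitian.inv.eq, Matrix.mul_assoc _ C⁻¹ Ghat,
      Matrix.mul_assoc]
  rw [hXX] at hγ
  have hγ0 : 0 < γ := hγ ▸ Real.sqrt_pos.mpr (div_pos hXX0 hK0)
  have hpow : (Bopt * Boptᴴ).trace = K := by
    rw [hBopt, trace_smul_mconj_mul_conjTranspose, inv_pow, hγ, Real.sq_sqrt (div_pos hXX0 hK0).le,
      inv_div, div_mul_cancel₀ _ hXX0.ne', Complex.ofReal_natCast]
  have hBX : γ • mconj Bopt = X := by
    rw [hBopt, mconj_smul_real, mconj_mconj, smul_smul, mul_inv_cancel₀ hγ0.ne', one_smul]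
  have hval := downlinkMSE_eq_of_smul_mconj_eq hRt.isHermitian hD hC hCX hBX
    (by rwa [Fintype.card_fin])
  rw [Fintype.card_fin] at hval
  refine ⟨hγ0, hpow, fun B α hB => hval ▸ ?_, ?_⟩
  · simpa using sub_re_trace_le_downlinkMSE hRt hρ hD hC hCX (by rwa [Fintype.card_fin]) α
  · rw [hval, hXdef, hC]
    simpa using card_sub_re_trace_eq_trace_inv hDpd Ghat
end

section
/- Let (Ω, ℱ, P) be a probability space and let A : Ω → ℂ^{K×K} be an integrable (Bochner) random matrix such that A(ω) is Hermitian positive semidefinite for almost every ω. Then E[trace((I_K + A)⁻¹)] ≥ trace((I_K + E[A])⁻¹). -/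
/-!
For positive definite `M` and any `Y`,
`tr (M⁻¹) - (tr Y + tr Yᴴ - tr (Yᴴ M Y)) = tr ((Y - M⁻¹)ᴴ M (Y - M⁻¹)) ≥ 0`, with equality at
`Y = M⁻¹`. Hence `tr ((I + A)⁻¹)` is a pointwise maximum of functions affine in
`A`, i.e. convex. Taking `Y = (I + E[A])⁻¹`, the corresponding affine minorant commutes with the
expectation, and it lies below `tr ((I + A)⁻¹)` pointwise; `E[A]` is positive semidefinite because
the positive semidefinite cone is closed and convex. The left side is integrable since
`0 ≤ tr ((I + A)⁻¹) ≤ K`.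
-/

open scoped ComplexOrder
open Matrix MeasureTheory

lemma RCLike.norm_le_of_nonneg_of_le {𝕜 : Type*} [RCLike 𝕜] {z : 𝕜} {c : ℝ} (h0 : 0 ≤ z)
    (hc : z ≤ c) : ‖z‖ ≤ c := by
  rw [← RCLike.ofReal_le_ofReal (K := 𝕜), RCLike.norm_of_nonneg' h0]
  exact hc

namespace Matrix

variable {n 𝕜 : Type*} [RCLike 𝕜]

lemma convex_setOf_posSemidef : Convex ℝ {B : n → n → 𝕜 | (of B).PosSemidef} :=
  fun _ hB _ hC _ _ ha hb _ => (hB.smul ha).add (hC.smul hb)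

variable [Fintype n]

lemma isClosed_setOf_posSemidef : IsClosed {B : n → n → 𝕜 | (of B).PosSemidef} := by
  simp only [posSemidef_iff_dotProduct_mulVec, Set.ofPred_and, Set.ofPred_forall]
  exact (isClosed_eq (by fun_prop) (by fun_prop)).inter
    (isClosed_iInter fun _ => isClosed_le (by fun_prop) (by fun_prop))

noncomputable def traceConjCLM (Y : Matrix n n 𝕜) : (n → n → 𝕜) →L[𝕜] 𝕜 :=
  LinearMap.toContinuousLinearMap <| traceLinearMap n 𝕜 𝕜 ∘ₗ LinearMap.mulRight 𝕜 Y ∘ₗ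
    LinearMap.mulLeft 𝕜 Yᴴ ∘ₗ (ofLinearEquiv 𝕜).toLinearMap

@[simp]
lemma traceConjCLM_apply (Y : Matrix n n 𝕜) (B : n → n → 𝕜) :
    traceConjCLM Y B = (Yᴴ * of B * Y).trace :=
  rfl

def traceInvMinorant (M Y : Matrix n n 𝕜) : 𝕜 := Y.trace + Yᴴ.trace - (Yᴴ * M * Y).trace

lemma traceInvMinorant_add (M B Y : Matrix n n 𝕜) :
    traceInvMinorant (M + B) Y = traceInvMinorant M Y - (Yᴴ * B * Y).trace := by
  simp only [traceInvMinorant, Matrix.mul_add, Matrix.add_mul, trace_add]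
  ring

variable [DecidableEq n]

lemma PosDef.traceInvMinorant_le_trace_inv {M : Matrix n n 𝕜} (hM : M.PosDef)
    (Y : Matrix n n 𝕜) : traceInvMinorant M Y ≤ M⁻¹.trace := by
  have hdet : IsUnit M.det := (isUnit_iff_isUnit_det M).mp hM.isUnit
  have hsq : (Y - M⁻¹)ᴴ * M * (Y - M⁻¹) = Yᴴ * M * Y - Yᴴ - Y + M⁻¹ := by
    rw [conjTranspose_sub, hM.isHermitian.inv.eq]
    simp only [sub_mul, mul_sub, Matrix.mul_assoc, mul_nonsing_inv _ hdet, nonsing_inv_mul _ hdet,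
      Matrix.mul_one, Matrix.one_mul]
    abel
  have hnonneg := (hM.posSemidef.conjTranspose_mul_mul_same (Y - M⁻¹)).trace_nonneg
  rw [hsq] at hnonneg
  simp only [trace_add, trace_sub] at hnonneg
  rw [traceInvMinorant]
  linear_combination hnonneg

lemma PosDef.traceInvMinorant_inv {M : Matrix n n 𝕜} (hM : M.PosDef) :
    traceInvMinorant M M⁻¹ = M⁻¹.trace := by
  rw [traceInvMinorant, hM.isHermitian.inv.eq, Matrix.mul_assoc,
    mul_nonsing_inv _ ((isUnit_iff_isUnit_det M).mp hM.isUnit), Matrix.mul_one]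
  ring

lemma PosSemidef.trace_inv_one_add_le {B : Matrix n n 𝕜} (hB : B.PosSemidef) :
    (1 + B)⁻¹.trace ≤ Fintype.card n := by
  set Y := (1 + B)⁻¹
  calc Y.trace = traceInvMinorant (1 + B) Y :=
        (PosDef.one.add_posSemidef hB).traceInvMinorant_inv.symm
    _ ≤ traceInvMinorant 1 Y := by
      rw [traceInvMinorant_add]
      exact sub_le_self _ (hB.conjTranspose_mul_mul_same Y).trace_nonneg
    _ ≤ (1 : Matrix n n 𝕜)⁻¹.trace := PosDef.one.traceInvMinorant_le_trace_inv Y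
    _ = Fintype.card n := by simp

lemma measurable_trace_inv_one_add : Measurable fun B : n → n → 𝕜 => ((1 + of B)⁻¹).trace := by
  simp only [inv_def, Ring.inverse_eq_inv', trace_smul, smul_eq_mul]
  have hc : Continuous fun B : n → n → 𝕜 => (1 + of B : Matrix n n 𝕜) :=
    continuous_const.add continuous_id
  exact hc.matrix_det.measurable.inv.mul hc.matrix_adjugate.matrix_trace.measurable

end Matrix

section Integral

variable {n 𝕜 : Type*} [Fintype n] [RCLike 𝕜]
variable {Ω : Type*} [MeasurableSpace Ω] {P : Measure Ω} {A : Ω → n → n → 𝕜}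

lemma posSemidef_integral [IsProbabilityMeasure P] (hA : Integrable A P)
    (hPSD : ∀ᵐ ω ∂P, (of (A ω)).PosSemidef) : (of (∫ ω, A ω ∂P)).PosSemidef :=
  convex_setOf_posSemidef.integral_mem isClosed_setOf_posSemidef
    (s := {B : n → n → 𝕜 | (of B).PosSemidef}) hPSD hA

variable [DecidableEq n]

lemma integrable_traceInvMinorant_one_add [IsFiniteMeasure P] (hA : Integrable A P)
    (Y : Matrix n n 𝕜) : Integrable (fun ω => traceInvMinorant (1 + of (A ω)) Y) P := by
  simp_rw [traceInvMinorant_add, ← traceConjCLM_apply]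
  exact (integrable_const _).sub ((traceConjCLM Y).integrable_comp hA)

lemma integral_traceInvMinorant_one_add [IsProbabilityMeasure P] (hA : Integrable A P)
    (Y : Matrix n n 𝕜) :
    ∫ ω, traceInvMinorant (1 + of (A ω)) Y ∂P = traceInvMinorant (1 + of (∫ ω, A ω ∂P)) Y := by
  simp_rw [traceInvMinorant_add, ← traceConjCLM_apply]
  rw [integral_sub (integrable_const _) ((traceConjCLM Y).integrable_comp hA), integral_const,
    (traceConjCLM Y).integral_comp_comm hA]
  simp

lemma integrable_trace_inv_one_add [IsFiniteMeasure P] (hA : AEStronglyMeasurable A P)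
    (hPSD : ∀ᵐ ω ∂P, (of (A ω)).PosSemidef) :
    Integrable (fun ω => ((1 + of (A ω))⁻¹).trace) P := by
  refine .of_bound
    (measurable_trace_inv_one_add.comp_aemeasurable hA.aemeasurable).aestronglyMeasurable
    (Fintype.card n) ?_
  filter_upwards [hPSD] with ω hω
  exact RCLike.norm_le_of_nonneg_of_le (PosDef.one.add_posSemidef hω).inv.posSemidef.trace_nonneg
    (by exact_mod_cast hω.trace_inv_one_add_le)

end Integral

/-- Matrix-valued Jensen inequality step: for an integrable random `K × K` complex matrix `A`
that is almost surely Hermitian positive semidefinite,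
`E[trace ((I + A)⁻¹)] ≥ trace ((I + E[A])⁻¹)`. -/
theorem jensen_trace_inv
    {Ω : Type*} [MeasurableSpace Ω] (P : Measure Ω) [IsProbabilityMeasure P]
    {K : ℕ} (A : Ω → Fin K → Fin K → ℂ)
    (hInt : Integrable A P)
    (hPSD : ∀ᵐ ω ∂P, (Matrix.of (A ω)).PosSemidef) :
    ∫ ω, ((1 + Matrix.of (A ω))⁻¹).trace ∂P ≥
      ((1 + Matrix.of (∫ ω, A ω ∂P))⁻¹).trace := by
  set C : Matrix (Fin K) (Fin K) ℂ := of (∫ ω, A ω ∂P)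
  have hC : (1 + C).PosDef := PosDef.one.add_posSemidef (posSemidef_integral hInt hPSD)
  calc ((1 + C)⁻¹).trace = traceInvMinorant (1 + C) (1 + C)⁻¹ := hC.traceInvMinorant_inv.symm
    _ = ∫ ω, traceInvMinorant (1 + of (A ω)) (1 + C)⁻¹ ∂P :=
        (integral_traceInvMinorant_one_add hInt _).symm
    _ ≤ ∫ ω, ((1 + of (A ω))⁻¹).trace ∂P := by
        refine integral_mono_ae (integrable_traceInvMinorant_one_add hInt _)
          (integrable_trace_inv_one_add hInt.1 hPSD) ?_
        filter_upwards [hPSD] with ω hω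
        exact (PosDef.one.add_posSemidef hω).traceInvMinorant_le_trace_inv _
end

section
/- Let Ω be a K×K complex Hermitian positive semidefinite matrix. Then trace((I_K + Ω)⁻¹) ≥ Σ_{i=1}^{K} 1/(1 + Ω_{ii}), and equality holds if and only if Ω is a diagonal matrix. -/
/-!
With `A = 1 + Ω` positive definite, `eᵢ` the `i`-th basis vector and `a = A i i`, the quadratic
form of `A` at `w = A⁻¹ eᵢ - a⁻¹ eᵢ` equals `A⁻¹ i i - a⁻¹`. Positivity of the form gives
`(A i i)⁻¹ ≤ A⁻¹ i i` (a Cauchy–Schwarz inequality for `eᵢ` and `A⁻¹ eᵢ`), with equality iff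
`w = 0`, i.e. iff `eᵢ` is an eigenvector of `A`, i.e. iff column `i` of `A` vanishes off the
diagonal. Summing over `i` gives the trace bound, with equality iff `A`, equivalently `Ω`, is
diagonal.
-/

open scoped ComplexOrder
open Matrix

namespace Matrix

variable {n : Type*} [DecidableEq n]

lemma isDiag_one_add_iff {α : Type*} [AddMonoidWithOne α] {A : Matrix n n α} :
    (1 + A).IsDiag ↔ A.IsDiag := by
  refine forall_congr' fun i => forall_congr' fun j => imp_congr_right fun hij => ?_
  simp [one_apply_ne hij]

variable [Fintype n]

lemma mulVec_col_nonsing_inv {R : Type*} [CommRing R] {A : Matrix n n R} (h : IsUnit A.det)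
    (i : n) : A *ᵥ A⁻¹.col i = Pi.single i 1 := by
  rw [← mulVec_single_one, mulVec_mulVec, mul_nonsing_inv A h, one_mulVec]

lemma nonsing_inv_mulVec_col {R : Type*} [CommRing R] {A : Matrix n n R} (h : IsUnit A.det)
    (i : n) : A⁻¹ *ᵥ A.col i = Pi.single i 1 := by
  rw [← mulVec_single_one, mulVec_mulVec, nonsing_inv_mul A h, one_mulVec]

namespace PosDef

variable {𝕜 : Type*} [RCLike 𝕜] {A : Matrix n n 𝕜}

lemma dotProduct_mulVec_col_inv_sub (hA : A.PosDef) (i : n) :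
    star (A⁻¹.col i - (A i i)⁻¹ • Pi.single i 1) ⬝ᵥ
        (A *ᵥ (A⁻¹.col i - (A i i)⁻¹ • Pi.single i 1)) = A⁻¹ i i - (A i i)⁻¹ := by
  have hAy := mulVec_col_nonsing_inv (A.isUnit_iff_isUnit_det.mp hA.isUnit) i
  have hyAx : star (A⁻¹.col i) ⬝ᵥ (A *ᵥ Pi.single i 1) = 1 := by
    have hvec : star (A⁻¹.col i) ᵥ* A = star (A *ᵥ A⁻¹.col i) := by
      rw [star_mulVec, hA.isHermitian.eq]
    rw [dotProduct_mulVec, hvec, hAy]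
    simp
  have ha : A i i ≠ 0 := hA.diag_pos.ne'
  have hta : star (A i i)⁻¹ = (A i i)⁻¹ := by rw [star_inv₀, hA.isHermitian.apply]
  have hb : star (A⁻¹ i i) = A⁻¹ i i := hA.inv.isHermitian.apply i i
  simp only [mulVec_sub, mulVec_smul, hAy, star_sub, star_smul, sub_dotProduct,
    dotProduct_sub, smul_dotProduct, dotProduct_smul, hyAx, hta]
  simp [hb, ha]

lemma inv_le_inv_apply_self (hA : A.PosDef) (i : n) : (A i i)⁻¹ ≤ A⁻¹ i i := by
  have h := hA.posSemidef.dotProduct_mulVec_nonneg (A⁻¹.col i - (A i i)⁻¹ • Pi.single i 1)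
  rwa [hA.dotProduct_mulVec_col_inv_sub, sub_nonneg] at h

lemma inv_eq_inv_apply_self_iff (hA : A.PosDef) (i : n) :
    (A i i)⁻¹ = A⁻¹ i i ↔ ∀ j ≠ i, A j i = 0 := by
  have hdet : IsUnit A.det := A.isUnit_iff_isUnit_det.mp hA.isUnit
  have ha : A i i ≠ 0 := hA.diag_pos.ne'
  constructor
  · intro h j hj
    have hw : A⁻¹.col i - (A i i)⁻¹ • Pi.single i 1 = 0 := by
      by_contra hw
      have hpos := hA.dotProduct_mulVec_pos hw
      rw [hA.dotProduct_mulVec_col_inv_sub, h, sub_self] at hpos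
      exact hpos.false
    have hcol : Pi.single i 1 = (A i i)⁻¹ • A.col i := by
      rw [← mulVec_col_nonsing_inv hdet i, sub_eq_zero.mp hw, mulVec_smul, mulVec_single_one]
    simpa [hj, ha] using congrFun hcol j
  · intro h
    have hcol : A.col i = A i i • Pi.single i 1 := by
      ext j
      rcases eq_or_ne j i with rfl | hj
      · simp
      · simp [h j hj, hj]
    have hinv := nonsing_inv_mulVec_col hdet i
    rw [hcol, mulVec_smul, mulVec_single_one] at hinv
    have hmul : A i i * A⁻¹ i i = 1 := by simpa using congrFun hinv i
    exact (eq_inv_of_mul_eq_one_right hmul).symm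

end PosDef

end Matrix

/-- Schwartz-inequality lemma: for a Hermitian positive semidefinite `K × K` matrix `Ω`,
`trace ((I + Ω)⁻¹) ≥ ∑ i, 1/(1 + Ω i i)`, with equality if and only if `Ω` is diagonal. -/
theorem trace_inv_ge_sum_inv_diag
    {K : ℕ} (Om : Matrix (Fin K) (Fin K) ℂ) (hOm : Om.PosSemidef) :
    ((1 + Om)⁻¹).trace ≥ ∑ i, 1 / (1 + Om i i) ∧
    (((1 + Om)⁻¹).trace = ∑ i, 1 / (1 + Om i i) ↔ Om.IsDiag) := by
  have hA : (1 + Om).PosDef := PosDef.one.add_posSemidef hOm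
  have hdiag (i : Fin K) : 1 / (1 + Om i i) = ((1 + Om) i i)⁻¹ := by simp
  have hle (i : Fin K) : 1 / (1 + Om i i) ≤ (1 + Om)⁻¹ i i :=
    hdiag i ▸ hA.inv_le_inv_apply_self i
  refine ⟨Finset.sum_le_sum fun i _ => hle i, ?_⟩
  calc ((1 + Om)⁻¹).trace = ∑ i, 1 / (1 + Om i i)
      ↔ ∀ i, ((1 + Om) i i)⁻¹ = (1 + Om)⁻¹ i i := by
        rw [eq_comm]
        simp only [trace, diag_apply]
        rw [Finset.sum_eq_sum_iff_of_le fun i _ => hle i]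
        simp [hdiag]
    _ ↔ (1 + Om).IsDiag := by
        simp only [hA.inv_eq_inv_apply_self_iff]
        exact ⟨fun h i j hij => h j i hij, fun h i j hji => h hji⟩
    _ ↔ Om.IsDiag := isDiag_one_add_iff
end
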